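/- arXiv:1807.10325 — 2 statements merged into one kernel-verified Lean document; each statement's English description precedes it below -/
import Mathlib

section
/- Define M^u_d(z,θ) = Σ_{k=0}^{d} C(d,k) · ∏_{i=0}^{k-1}(θ + ρ_i²) · ∏_{i=k+1}^{d}(z-i)(z+i+u-d), where ρ_i = i + 1/2. Then for all natural numbers u and d ≥ 1, one has the two-variable polynomial identity M^u_d = (θ + (z+ρ_{u-d})²) · M^u_{d-1} − u(z+u) · M^{u-1}_{d-1} (with M^{u-1}_{d-1} interpreted for u ≥ 1; when u = 0 the second term vanishes since it has factor u). -/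
open Finset

/-- The two-variable polynomial ring `ℚ[z, θ]`: variable `0` is `z` and variable `1` is `θ`. -/
noncomputable abbrev R2 : Type := MvPolynomial (Fin 2) ℚ

noncomputable def z : R2 := MvPolynomial.X 0
noncomputable def θ : R2 := MvPolynomial.X 1

/-- `ρ n = n + 1/2` for a (possibly negative) integer `n`. -/
noncomputable def rho (n : ℤ) : R2 := (n : R2) + MvPolynomial.C (1 / 2 : ℚ)

/-- `M u d = Σ_{k=0}^{d} C(d,k) · ∏_{i=0}^{k-1}(θ + ρ_i²) · ∏_{i=k+1}^{d}(z-i)(z+i+u-d)`. -/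
noncomputable def M (u d : ℕ) : R2 :=
  ∑ k ∈ Finset.range (d + 1),
    (d.choose k : R2) * (∏ i ∈ Finset.range k, (θ + (rho (i : ℤ)) ^ 2)) *
      ∏ i ∈ Finset.Icc (k + 1) d, ((z - (i : R2)) * (z + (i : R2) + (u : R2) - (d : R2)))


/-!
With `a = z + u - d`, the sum `M u d` depends only on `a` and `d`: it is
`S_a(d) = Σ_k C(d,k) A_k P_a(k,d)` with `A_k = ∏_{i<k} (θ + ρ_i²)` and
`P_a(k,d) = ∏_{i=k+1}^{d} (z - i)(a + i)`. The claim becomes the recurrence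
`S_a(e+1) = (θ + (a+½)²) S_{a+1}(e) - (a+e+1-z)(a+e+1) S_a(e)`, true for arbitrary `z θ a` in any
commutative ring in which `2` is invertible. After Pascal's rule splits `C(e+1,k)`, the two sides
agree term by term up to differences `E_{k+1} - E_k` of `E_k = k C(e,k) A_k (a+k+1) P_{a+1}(k,e)`,
which telescope to `0`. The term-wise identity rests on
`(a+k+1) P_{a+1}(k,e) = (a+e+1) P_a(k,e)` and `(a+½)² - (k+½)² = (a-k)(a+k+1)`.
-/

namespace MRecurrence

variable {R : Type*} [CommRing R] (z θ : R)

noncomputable def tailProd (a : R) (k e : ℕ) : R :=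
  ∏ i ∈ Icc (k + 1) e, (z - i) * (a + i)

lemma tailProd_self (a : R) (e : ℕ) : tailProd z a e e = 1 := by
  rw [tailProd, Icc_eq_empty (by omega), prod_empty]

lemma tailProd_succ_right (a : R) {k e : ℕ} (h : k ≤ e) :
    tailProd z a k (e + 1) = tailProd z a k e * ((z - (e + 1)) * (a + (e + 1))) := by
  rw [tailProd, tailProd, prod_Icc_succ_top (by omega)]
  push_cast
  rfl

lemma tailProd_eq_mul_succ_left (a : R) {k e : ℕ} (h : k < e) :
    tailProd z a k e = (z - (k + 1)) * (a + (k + 1)) * tailProd z a (k + 1) e := by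
  rw [tailProd, tailProd, ← Ico_add_one_right_eq_Icc, prod_eq_prod_Ico_succ_bot (by omega),
    Ico_add_one_right_eq_Icc]
  push_cast
  rfl

lemma tailProd_add_one (a : R) {k e : ℕ} (h : k ≤ e) :
    (a + k + 1) * tailProd z (a + 1) k e = (a + e + 1) * tailProd z a k e := by
  induction e, h using Nat.le_induction with
  | base => simp [tailProd_self]
  | succ n hkn ih =>
    rw [tailProd_succ_right z _ hkn, tailProd_succ_right z _ hkn]
    push_cast
    linear_combination (z - (n + 1)) * (a + n + 2) * ih

variable [Invertible (2 : R)]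

noncomputable def thetaProd (k : ℕ) : R :=
  ∏ i ∈ range k, (θ + ((i : R) + ⅟2) ^ 2)

noncomputable def shiftedM (a : R) (e : ℕ) : R :=
  ∑ k ∈ range (e + 1), (e.choose k : R) * thetaProd θ k * tailProd z a k e

lemma thetaProd_succ (k : ℕ) :
    thetaProd θ (k + 1) = thetaProd θ k * (θ + ((k : R) + ⅟2) ^ 2) :=
  prod_range_succ _ _

noncomputable def telescopingTerm (a : R) (e k : ℕ) : R :=
  k * e.choose k * thetaProd θ k * (a + k + 1) * tailProd z (a + 1) k e

lemma shiftedM_succ_summand (a : R) {e k : ℕ} (hk : k ≤ e) :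
    (e.choose k : R) * (thetaProd θ k * tailProd z a k (e + 1)
        + thetaProd θ (k + 1) * tailProd z a (k + 1) (e + 1))
      = (θ + (a + ⅟2) ^ 2) * (e.choose k * thetaProd θ k * tailProd z (a + 1) k e)
        - (a + e + 1 - z) * (a + e + 1) * (e.choose k * thetaProd θ k * tailProd z a k e)
        - (telescopingTerm z θ a e (k + 1) - telescopingTerm z θ a e k) := by
  have half : (⅟2 : R) * 2 = 1 := invOf_mul_self 2
  rcases hk.lt_or_eq with hlt | rfl
  · have choose_succ : (e.choose (k + 1) : R) * (k + 1) = e.choose k * (e - k) := by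
      simpa [Nat.cast_sub hk] using congrArg (Nat.cast : ℕ → R) (Nat.choose_succ_right_eq e k)
    have shift := tailProd_add_one z a (Nat.succ_le_of_lt hlt)
    rw [telescopingTerm, telescopingTerm, thetaProd_succ, tailProd_succ_right z a hk,
      tailProd_succ_right z a hlt, tailProd_eq_mul_succ_left z a hlt,
      tailProd_eq_mul_succ_left z (a + 1) hlt]
    push_cast at shift ⊢
    linear_combination
      (-(thetaProd θ k * e.choose k *
        ((z - k - 1) * (θ + (a + ⅟2) ^ 2) + k * (a + k + 1) * (z - k - 1)
          - (e - k) * (θ + (k + ⅟2) ^ 2)))) * shift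
      + (thetaProd θ k * (θ + (k + ⅟2) ^ 2) * (a + k + 2) * tailProd z (a + 1) (k + 1) e) * choose_succ
      - (thetaProd θ k * e.choose k * (a + e + 1) * (z - k - 1) * (a - k)
          * tailProd z a (k + 1) e) * half
  · rw [telescopingTerm, telescopingTerm, thetaProd_succ, tailProd_succ_right z a le_rfl]
    simp only [tailProd_self, Nat.choose_succ_self, Nat.choose_self, Nat.cast_zero, Nat.cast_one]
    linear_combination (-(thetaProd θ k * (a - k))) * half

theorem shiftedM_succ (a : R) (e : ℕ) :
    shiftedM z θ a (e + 1) = (θ + (a + ⅟2) ^ 2) * shiftedM z θ (a + 1) e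
      - (a + e + 1 - z) * (a + e + 1) * shiftedM z θ a e := by
  have pascal := sum_choose_succ_mul (fun i _ => thetaProd θ i * tailProd z a i (e + 1)) e
  have ends : telescopingTerm z θ a e (e + 1) - telescopingTerm z θ a e 0 = 0 := by
    simp [telescopingTerm]
  simp only [← mul_assoc] at pascal
  rw [shiftedM, pascal, ← sum_add_distrib, shiftedM, shiftedM, mul_sum, mul_sum,
    ← sub_zero (_ - _), ← ends, ← sum_range_sub, ← sum_sub_distrib, ← sum_sub_distrib]
  refine sum_congr rfl fun k hk => ?_
  linear_combination
    shiftedM_succ_summand z θ a (Nat.lt_succ_iff.mp (mem_range.mp hk))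

end MRecurrence

open MRecurrence

noncomputable instance : Invertible (2 : R2) where
  invOf := MvPolynomial.C (1 / 2)
  invOf_mul_self := by rw [← map_ofNat MvPolynomial.C 2, ← map_mul]; norm_num
  mul_invOf_self := by rw [← map_ofNat MvPolynomial.C 2, ← map_mul]; norm_num

lemma rho_eq (n : ℤ) : rho n = n + ⅟2 := rfl

lemma M_eq_shiftedM {u d : ℕ} {a : R2} (ha : a = z + u - d) : M u d = shiftedM z θ a d := by
  refine sum_congr rfl fun k _ => ?_
  simp only [thetaProd, tailProd, rho_eq, Int.cast_natCast, ha]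
  congr 1
  exact prod_congr rfl fun i _ => by ring

theorem stmt4 (u d : ℕ) (hd : 1 ≤ d) :
    M u d =
      (θ + (z + rho ((u : ℤ) - (d : ℤ))) ^ 2) * M u (d - 1) -
        (u : R2) * (z + (u : R2)) * M (u - 1) (d - 1) := by
  obtain ⟨e, rfl⟩ : ∃ e, d = e + 1 := ⟨d - 1, by omega⟩
  set a : R2 := z + u - e - 1 with ha
  have hρ : z + rho ((u : ℤ) - ((e + 1 : ℕ) : ℤ)) = a + ⅟2 := by
    rw [rho_eq]; push_cast; ring
  have hu : (a + e + 1 - z) * (a + e + 1) = u * (z + u) := by ring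
  rw [M_eq_shiftedM (a := a) (by push_cast; ring), shiftedM_succ, Nat.add_sub_cancel,
    ← M_eq_shiftedM (u := u) (d := e) (by rw [ha]; ring), hρ, hu]
  rcases u with _ | v
  · simp
  · rw [← M_eq_shiftedM (u := v) (d := e) (by rw [ha]; push_cast; ring), Nat.add_sub_cancel]
end

section
/- Define M^u_d(z,θ) = Σ_{k=0}^{d} C(d,k) · ∏_{i=0}^{k-1}(θ + ρ_i²) · ∏_{i=k+1}^{d}(z-i)(z+i+u-d), where ρ_i = i + 1/2. Then for all natural numbers u ≥ 1 and d ≥ 1, one has (u+d)(z+u-d) · M^u_d = u(z+u) · M^{u-1}_d + d(z-d)(θ + (z+ρ_{u-d})²) · M^u_{d-1}, as an identity of polynomials in z and θ. -/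
/-!
Write `A k = ∏_{i<k} (θ + ρ_i²)` and `P k` for the product over `i ∈ [k+1, d]` in `M u d`. The
`k`-th summands of the two sides differ by `F k - F (k+1)`, where `F k = k C(d,k) (z-k) A k P k`,
so the difference telescopes to `F 0 - F (d+1) = 0`. After cancelling `C(d,k) A k`, the termwise
identity comes down to `(z + ρ_{u-d})² - ρ_k² = (z+u-d-k)(z+u-d+k+1)`, together with the effect
on `P k` of shifting `u` or `d` by one.
-/

open Finset

section ShiftedProd

variable {R : Type*} [CommRing R] (x : R) (u d : ℕ)

noncomputable def shiftedProd (k : ℕ) : R :=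
  ∏ i ∈ Icc (k + 1) d, ((x - (i : R)) * (x + (i : R) + (u : R) - (d : R)))

theorem shiftedProd_of_le {k : ℕ} (h : d ≤ k) : shiftedProd x u d k = 1 :=
  prod_eq_one fun i hi => by grind

theorem shiftedProd_of_lt {k : ℕ} (h : k < d) :
    shiftedProd x u d k =
      (x - (k + 1)) * (x + (k + 1) + u - d) * shiftedProd x u d (k + 1) := by
  rw [shiftedProd, Icc_eq_cons_Ioc h, prod_cons, ← Icc_add_one_left_eq_Ioc]
  push_cast
  rfl

theorem add_mul_shiftedProd {k : ℕ} (hk : k ≤ d) :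
    (x + u + 1) * shiftedProd x u d k = (x + k + u + 1 - d) * shiftedProd x (u + 1) d k := by
  induction hk using Nat.decreasingInduction with
  | self => simp only [shiftedProd_of_le _ _ _ le_rfl]; ring
  | of_succ k hk ih =>
    rw [shiftedProd_of_lt _ _ _ hk, shiftedProd_of_lt _ _ _ hk]
    push_cast at ih ⊢
    linear_combination (x - (k + 1)) * (x + (k + 1) + u - d) * ih

theorem sub_mul_shiftedProd {k : ℕ} (hk : k ≤ d) :
    (x - (d + 1)) * shiftedProd x u d k = (x - (k + 1)) * shiftedProd x u (d + 1) (k + 1) := by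
  induction hk using Nat.decreasingInduction with
  | self => simp only [shiftedProd_of_le _ _ _ le_rfl]
  | of_succ k hk ih =>
    rw [shiftedProd_of_lt _ _ _ hk, shiftedProd_of_lt _ _ (d + 1) (by omega : k + 1 < d + 1)]
    push_cast at ih ⊢
    linear_combination (x - (k + 1)) * (x + (k + 1) + u - d) * ih

end ShiftedProd

theorem succ_mul_choose_succ {R : Type*} [CommRing R] {d k : ℕ} (hk : k ≤ d) :
    ((k : R) + 1) * d.choose (k + 1) = ((d : R) - k) * d.choose k := by
  have h := congrArg (Nat.cast : ℕ → R) (Nat.choose_succ_right_eq d k)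
  push_cast [Nat.cast_sub hk] at h
  linear_combination h

theorem mul_choose_pred {R : Type*} [CommRing R] {d k : ℕ} (hk : k ≤ d) :
    (d : R) * (d - 1).choose k = ((d : R) - k) * d.choose k := by
  obtain _ | d := d
  · simp [Nat.le_zero.mp hk]
  have h := congrArg (Nat.cast : ℕ → R) (Nat.choose_mul_succ_eq d k)
  push_cast [Nat.cast_sub hk] at h
  push_cast [Nat.add_sub_cancel]
  linear_combination h

theorem add_rho_sq_sub_rho_sq (a : R2) (m n : ℤ) :
    (a + rho m) ^ 2 - rho n ^ 2 = (a + m - n) * (a + m + n + 1) := by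
  have half : (MvPolynomial.C (1 / 2 : ℚ) : R2) * 2 = 1 := by
    rw [← map_ofNat MvPolynomial.C 2, ← map_mul]; norm_num
  unfold rho
  linear_combination (a + m - n) * half

noncomputable def thetaProd (k : ℕ) : R2 := ∏ i ∈ range k, (θ + rho i ^ 2)

theorem thetaProd_succ (k : ℕ) : thetaProd (k + 1) = thetaProd k * (θ + rho k ^ 2) :=
  prod_range_succ _ _

theorem M_eq_sum_range (u : ℕ) {d n : ℕ} (h : d < n) :
    M u d = ∑ k ∈ range n, d.choose k * thetaProd k * shiftedProd z u d k := by
  refine sum_subset (range_subset_range.2 h) fun k _ hk => ?_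
  rw [Nat.choose_eq_zero_of_lt (by simpa using hk)]
  simp

noncomputable def telescopeTerm (u d k : ℕ) : R2 :=
  k * d.choose k * (z - k) * thetaProd k * shiftedProd z u d k

theorem summand_eq_telescopeTerm_sub (u d k : ℕ) (hu : 1 ≤ u) (hk : k ≤ d) :
    ((u : R2) + d) * (z + u - d) * (d.choose k * thetaProd k * shiftedProd z u d k) -
        (u * (z + u) * (d.choose k * thetaProd k * shiftedProd z (u - 1) d k) +
          d * (z - d) * (θ + (z + rho ((u : ℤ) - (d : ℤ))) ^ 2) *
            ((d - 1).choose k * thetaProd k * shiftedProd z u (d - 1) k)) =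
      telescopeTerm u d k - telescopeTerm u d (k + 1) := by
  obtain ⟨u, rfl⟩ := Nat.exists_eq_add_of_le' hu
  have hc' := mul_choose_pred (R := R2) hk
  rw [Nat.add_sub_cancel]
  rcases hk.lt_or_eq with hk | rfl
  · obtain ⟨d, rfl⟩ : ∃ e, d = e + 1 := ⟨d - 1, by omega⟩
    have hPm := add_mul_shiftedProd z u (d + 1) hk.le
    have hPd := sub_mul_shiftedProd z (u + 1) d (Nat.le_of_lt_succ hk)
    have hP := shiftedProd_of_lt z (u + 1) (d + 1) hk
    have hc := succ_mul_choose_succ (R := R2) hk.le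
    have hΘ := add_rho_sq_sub_rho_sq z ((u + 1 : ℕ) - (d + 1 : ℕ) : ℤ) k
    rw [telescopeTerm, telescopeTerm, thetaProd_succ]
    simp only [Nat.add_sub_cancel] at hc' ⊢
    push_cast at *
    linear_combination
      (-(u + 1) * (d + 1).choose k * thetaProd k) * hPm
      - ((d + 1) * (θ + (z + rho (u + 1 - (d + 1))) ^ 2) * d.choose k * thetaProd k) * hPd
      - ((θ + (z + rho (u + 1 - (d + 1))) ^ 2) * thetaProd k * (z - (k + 1))
          * shiftedProd z (u + 1) (d + 1) (k + 1)) * hc'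
      + ((z - (k + 1)) * thetaProd k * (θ + rho k ^ 2) * shiftedProd z (u + 1) (d + 1) (k + 1)) * hc
      - ((d + 1 - k) * (d + 1).choose k * thetaProd k * (z - (k + 1))
          * shiftedProd z (u + 1) (d + 1) (k + 1)) * hΘ
      + ((d + 1).choose k * thetaProd k * (d + 1 - k) * (z + (u + 1) - (d + 1) - k)) * hP
  · simp only [telescopeTerm, shiftedProd_of_le _ _ _ le_rfl,
      shiftedProd_of_le _ _ _ (Nat.sub_le k 1), shiftedProd_of_le _ _ _ (Nat.le_succ k), Nat.choose_self, Nat.choose_succ_self] at hc' ⊢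
    push_cast at hc' ⊢
    linear_combination (-(z - k) * (θ + (z + rho (u + 1 - k)) ^ 2) * thetaProd k) * hc'

theorem stmt5_general (u d : ℕ) (hu : 1 ≤ u) :
    ((u : R2) + (d : R2)) * (z + (u : R2) - (d : R2)) * M u d =
      (u : R2) * (z + (u : R2)) * M (u - 1) d +
        (d : R2) * (z - (d : R2)) * (θ + (z + rho ((u : ℤ) - (d : ℤ))) ^ 2) * M u (d - 1) := by
  rw [← sub_eq_zero, M_eq_sum_range u (Nat.lt_succ_self d),
    M_eq_sum_range (u - 1) (Nat.lt_succ_self d), M_eq_sum_range u (by omega : d - 1 < d + 1), mul_sum, mul_sum, mul_sum, ← sum_add_distrib,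
    ← sum_sub_distrib]
  rw [sum_congr rfl fun k hk => summand_eq_telescopeTerm_sub u d k hu (mem_range_succ_iff.mp hk),
    sum_range_sub']
  simp [telescopeTerm]

theorem stmt5 (u d : ℕ) (hu : 1 ≤ u) (hd : 1 ≤ d) :
    ((u : R2) + (d : R2)) * (z + (u : R2) - (d : R2)) * M u d =
      (u : R2) * (z + (u : R2)) * M (u - 1) d +
        (d : R2) * (z - (d : R2)) * (θ + (z + rho ((u : ℤ) - (d : ℤ))) ^ 2) * M u (d - 1) :=
  stmt5_general u d hu
end
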